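/- arXiv:0803.4388 — 2 statements merged into one kernel-verified Lean document; each statement's English description precedes it below -/
import Mathlib

section
/- For n ≥ 1, Σ_{k=1}^∞ (A_{n,k} + B_{n,k}) t^k = t(F_{n+1} - t F_{n-1})/(t^2 - 3t + 1), where A_{n,k} = Σ_{i=0}^{k-1} C(n+k-i-2, n-1) F_{2i+1} and B_{n,k} = Σ_{i=0}^{n-1} C(n+k-i-2, k-1) F_i. -/
/-!
Pascal's rule in the upper index shows that `S n k := A n k + B n k` satisfies
`S (n+1) (k+1) = S n (k+1) + S (n+1) k`, the recurrence of `F_{n+2k-1}`; on the boundary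
`S 1 k = F_{2k}` (a sum of odd-indexed Fibonacci numbers) and `S n 1 = F_{n+1}` (a sum of
Fibonacci numbers). So the series is `∑_{k≥1} F_{n+2k-1} t^k`, which by Binet's formula is a
difference of two geometric series with ratios `φ² t` and `ψ² t`, where
`(1 - φ² t)(1 - ψ² t) = t² - 3t + 1`.
-/

noncomputable def A (n k : ℕ) : ℝ :=
  ∑ i ∈ Finset.range k, (Nat.choose (n + k - i - 2) (n - 1) : ℝ) * Nat.fib (2 * i + 1)

noncomputable def B (n k : ℕ) : ℝ :=
  ∑ i ∈ Finset.range n, (Nat.choose (n + k - i - 2) (k - 1) : ℝ) * Nat.fib i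

open Finset Real goldenRatio

lemma A_add_two_succ (n k : ℕ) : A (n + 2) (k + 1) = A (n + 1) (k + 1) + A (n + 2) k := by
  have pascal : ∀ i ∈ range (k + 1),
      (Nat.choose (n + 2 + (k + 1) - i - 2) (n + 1) : ℝ) =
        Nat.choose (n + 1 + (k + 1) - i - 2) n + Nat.choose (n + 2 + k - i - 2) (n + 1) := by
    intro i hi
    have hik : i ≤ k := Nat.lt_succ_iff.mp (mem_range.mp hi)
    rw [show n + 2 + (k + 1) - i - 2 = n + k - i + 1 by omega,
      show n + 1 + (k + 1) - i - 2 = n + k - i by omega,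
      show n + 2 + k - i - 2 = n + k - i by omega, Nat.choose_succ_succ, Nat.cast_add]
  have last : Nat.choose (n + 2 + k - k - 2) (n + 1) = 0 := by
    rw [show n + 2 + k - k - 2 = n by omega]; exact Nat.choose_succ_self n
  simp only [A, show n + 2 - 1 = n + 1 from rfl, Nat.add_sub_cancel]
  rw [sum_congr rfl fun i hi => by rw [pascal i hi, add_mul], sum_add_distrib,
    sum_range_succ fun i => (Nat.choose (n + 2 + k - i - 2) (n + 1) : ℝ) * Nat.fib (2 * i + 1),
    last, Nat.cast_zero, zero_mul, add_zero]

lemma B_add_two_add_two (n k : ℕ) :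
    B (n + 2) (k + 2) = B (n + 2) (k + 1) + B (n + 1) (k + 2) := by
  have pascal : ∀ i ∈ range (n + 2),
      (Nat.choose (n + 2 + (k + 2) - i - 2) (k + 1) : ℝ) =
        Nat.choose (n + 2 + (k + 1) - i - 2) k + Nat.choose (n + 1 + (k + 2) - i - 2) (k + 1) := by
    intro i hi
    have hin : i ≤ n + 1 := Nat.lt_succ_iff.mp (mem_range.mp hi)
    rw [show n + 2 + (k + 2) - i - 2 = n + k + 1 - i + 1 by omega,
      show n + 2 + (k + 1) - i - 2 = n + k + 1 - i by omega,
      show n + 1 + (k + 2) - i - 2 = n + k + 1 - i by omega, Nat.choose_succ_succ, Nat.cast_add]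
  have last : Nat.choose (n + 1 + (k + 2) - (n + 1) - 2) (k + 1) = 0 := by
    rw [show n + 1 + (k + 2) - (n + 1) - 2 = k by omega]; exact Nat.choose_succ_self k
  simp only [B, show k + 2 - 1 = k + 1 from rfl, Nat.add_sub_cancel]
  rw [sum_congr rfl fun i hi => by rw [pascal i hi, add_mul], sum_add_distrib,
    sum_range_succ fun i => (Nat.choose (n + 1 + (k + 2) - i - 2) (k + 1) : ℝ) * Nat.fib i,
    last, Nat.cast_zero, zero_mul, add_zero]

lemma sum_range_fib_two_mul_add_one (k : ℕ) :
    ∑ i ∈ range k, Nat.fib (2 * i + 1) = Nat.fib (2 * k) := by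
  induction k with
  | zero => simp
  | succ k ih => rw [sum_range_succ, ih, Nat.mul_succ, Nat.fib_add_two]

lemma A_add_B_one_left (k : ℕ) : A 1 (k + 1) + B 1 (k + 1) = Nat.fib (2 * k + 2) := by
  have := sum_range_fib_two_mul_add_one (k + 1)
  simp only [A, B, Nat.choose_zero_right, Nat.cast_one, one_mul, sum_range_one, Nat.fib_zero,
    Nat.cast_zero, mul_zero, add_zero, Nat.sub_self]
  exact_mod_cast this

lemma A_add_B_one_right (n : ℕ) : A (n + 2) 1 + B (n + 2) 1 = Nat.fib (n + 3) := by
  simp [A, B, Nat.fib_succ_eq_succ_sum (n + 2), add_comm, show 1 + (n + 2) - 2 = n + 1 by omega]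

lemma A_add_B_eq_fib (n k : ℕ) :
    A (n + 1) (k + 1) + B (n + 1) (k + 1) = Nat.fib (n + 2 * k + 2) := by
  induction n generalizing k with
  | zero => simpa using A_add_B_one_left k
  | succ n ihn =>
    induction k with
    | zero => exact A_add_B_one_right n
    | succ k ihk =>
      have := ihn (k + 1)
      rw [A_add_two_succ, B_add_two_add_two,
        show n + 1 + 2 * (k + 1) + 2 = (n + 2 * k + 3) + 2 by ring, Nat.fib_add_two, Nat.cast_add]
      rw [show n + 1 + 2 * k + 2 = n + 2 * k + 3 by ring] at ihk
      rw [show n + 2 * (k + 1) + 2 = n + 2 * k + 3 + 1 by ring] at this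
      linear_combination ihk + this

lemma one_sub_three_mul_add_sq (t : ℝ) :
    1 - 3 * t + t ^ 2 = (1 - t * φ ^ 2) * (1 - t * ψ ^ 2) := by
  have hsum : φ ^ 2 + ψ ^ 2 = 3 := by
    rw [goldenRatio_sq, goldenConj_sq]; linear_combination goldenRatio_add_goldenConj
  have hprod : (φ * ψ) ^ 2 = 1 := by rw [goldenRatio_mul_goldenConj]; norm_num
  linear_combination t * hsum - t ^ 2 * hprod

lemma abs_goldenRatio_sq_mul_lt_one {t : ℝ} (ht : |t| < 1 / 3) : |t * φ ^ 2| < 1 := by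
  rw [abs_mul, abs_of_pos (by positivity : (0:ℝ) < φ ^ 2), goldenRatio_sq]
  nlinarith [goldenRatio_lt_two, goldenRatio_pos, abs_nonneg t]

lemma abs_goldenConj_sq_mul_lt_one {t : ℝ} (ht : |t| < 1 / 3) : |t * ψ ^ 2| < 1 := by
  rw [abs_mul, abs_of_nonneg (sq_nonneg ψ), goldenConj_sq]
  nlinarith [goldenConj_neg, neg_one_lt_goldenConj, abs_nonneg t]

lemma hasSum_fib_add_two_mul_mul_pow (m : ℕ) {t : ℝ} (ht : |t| < 1 / 3) :
    HasSum (fun k : ℕ => (Nat.fib (m + 2 * k + 2) : ℝ) * t ^ k)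
      ((Nat.fib (m + 2) - t * Nat.fib m) / (1 - 3 * t + t ^ 2)) := by
  have hφ := abs_goldenRatio_sq_mul_lt_one ht
  have hψ := abs_goldenConj_sq_mul_lt_one ht
  have hφ₀ : 1 - t * φ ^ 2 ≠ 0 := sub_ne_zero.mpr ((le_abs_self _).trans_lt hφ).ne'
  have hψ₀ : 1 - t * ψ ^ 2 ≠ 0 := sub_ne_zero.mpr ((le_abs_self _).trans_lt hψ).ne'
  have binet : (fun k : ℕ => (Nat.fib (m + 2 * k + 2) : ℝ) * t ^ k) =
      fun k => (φ ^ (m + 2) * (t * φ ^ 2) ^ k - ψ ^ (m + 2) * (t * ψ ^ 2) ^ k) / √5 := by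
    funext k
    rw [coe_fib_eq, mul_pow, mul_pow, ← pow_mul, ← pow_mul]
    ring
  have value : ((Nat.fib (m + 2) - t * Nat.fib m) / (1 - 3 * t + t ^ 2) : ℝ) =
      (φ ^ (m + 2) * (1 - t * φ ^ 2)⁻¹ - ψ ^ (m + 2) * (1 - t * ψ ^ 2)⁻¹) / √5 := by
    rw [coe_fib_eq, coe_fib_eq, one_sub_three_mul_add_sq]
    have : (φ * ψ) ^ 2 = 1 := by rw [goldenRatio_mul_goldenConj]; norm_num
    have h5 : √5 ≠ 0 := by positivity
    -- otherwise `field_simp` unfolds `φ` and `ψ` into expressions in `√5`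
    generalize φ = p, ψ = q at this hφ₀ hψ₀ ⊢
    field_simp
    linear_combination t * (p ^ m - q ^ m) * this
  rw [binet, value]
  exact (((hasSum_geometric_of_abs_lt_one hφ).mul_left _).sub
    ((hasSum_geometric_of_abs_lt_one hψ).mul_left _)).div_const _

theorem column_generating_function (n : ℕ) (hn : 1 ≤ n) :
    ∃ ε > 0, ∀ t : ℝ, |t| < ε →
      HasSum (fun k : ℕ => (A n (k + 1) + B n (k + 1)) * t ^ (k + 1))
        (t * ((Nat.fib (n + 1) : ℝ) - t * Nat.fib (n - 1)) / (t ^ 2 - 3 * t + 1)) := by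
  obtain ⟨m, rfl⟩ := Nat.exists_eq_add_of_le' hn
  refine ⟨1 / 3, by norm_num, fun t ht => ?_⟩
  have hterm : (fun k : ℕ => (A (m + 1) (k + 1) + B (m + 1) (k + 1)) * t ^ (k + 1)) =
      fun k => t * ((Nat.fib (m + 2 * k + 2) : ℝ) * t ^ k) := by
    funext k
    rw [A_add_B_eq_fib]
    ring
  rw [hterm, Nat.add_sub_cancel, mul_div_assoc,
    show t ^ 2 - 3 * t + 1 = 1 - 3 * t + t ^ 2 by ring]
  exact (hasSum_fib_add_two_mul_mul_pow m ht).mul_left t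
end

section
/- For 0 ≤ s ≤ (r-n)/2, the incomplete Lucas numbers satisfy the inversion formula L_{r+n}(s+n) = Σ_{k=0}^{n} C(n,k) (-1)^{n-k} L_{r+2k}(s+k). -/
/-! The summands `n / (n - j) * C(n - j, j)` obey the Pascal-type recurrence
`T(m + 2, i + 1) = T(m + 1, i + 1) + T(m, i)`, hence `L_{m+2}(j+1) = L_{m+1}(j+1) + L_m(j)`.
Along the diagonal `f k = L_{r+2k}(s+k)` this says that the forward difference of
`k ↦ L_{r+t+2k}(s+t+k)` is the same sequence with `t` raised by one, so `L_{r+n}(s+n)` is the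
`n`-th forward difference of `f` at `0`, and expanding `Δⁿ` binomially gives the formula. -/

def incLucas (n k : ℕ) : ℚ :=
  ∑ j ∈ Finset.range (k + 1), (n : ℚ) / (n - j) * Nat.choose (n - j) j

open Finset fwdDiff

def lucasTerm (n j : ℕ) : ℚ :=
  (n : ℚ) / (n - j) * Nat.choose (n - j) j

lemma incLucas_eq_sum_lucasTerm (n k : ℕ) :
    incLucas n k = ∑ j ∈ range (k + 1), lucasTerm n j :=
  rfl

lemma lucasTerm_zero {n : ℕ} (hn : n ≠ 0) : lucasTerm n 0 = 1 := by
  simp [lucasTerm, hn]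

lemma lucasTerm_add_two_succ {m i : ℕ} (h : i < m) :
    lucasTerm (m + 2) (i + 1) = lucasTerm (m + 1) (i + 1) + lucasTerm m i := by
  obtain ⟨a, rfl⟩ : ∃ a, m = i + a + 1 := ⟨m - i - 1, by omega⟩
  have pascal : ((a + 2).choose (i + 1) : ℚ) = (a + 1).choose i + (a + 1).choose (i + 1) := by
    exact_mod_cast Nat.choose_succ_succ' (a + 1) i
  have absorb : ((a + 2) * (a + 1).choose i : ℚ) = (a + 2).choose (i + 1) * (i + 1) := by
    exact_mod_cast Nat.add_one_mul_choose_eq (a + 1) i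
  simp only [lucasTerm, show i + a + 1 + 2 - (i + 1) = a + 2 by omega,
    show i + a + 1 + 1 - (i + 1) = a + 1 by omega, show i + a + 1 - i = a + 1 by omega]
  push_cast
  rw [show (i + a + 1 + 2 - (i + 1) : ℚ) = a + 2 by ring,
    show (i + a + 1 + 1 - (i + 1) : ℚ) = a + 1 by ring, show (i + a + 1 - i : ℚ) = a + 1 by ring]
  field_simp
  linear_combination (↑a + 2) * (↑i + ↑a + 2) * pascal + absorb

lemma incLucas_add_two_succ {m j : ℕ} (h : j < m) :
    incLucas (m + 2) (j + 1) = incLucas (m + 1) (j + 1) + incLucas m j := by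
  simp only [incLucas_eq_sum_lucasTerm, sum_range_succ' _ (j + 1),
    lucasTerm_zero (Nat.succ_ne_zero _)]
  rw [sum_congr rfl fun i hi => lucasTerm_add_two_succ (by grind), sum_add_distrib]
  ring

lemma fwdDiff_iter_incLucas {r s : ℕ} (h : s < r) (t : ℕ) :
    Δ_[1] ^[t] (fun k => incLucas (r + 2 * k) (s + k)) =
      fun k => incLucas (r + t + 2 * k) (s + t + k) := by
  induction t with
  | zero => rfl
  | succ t ih =>
    funext k
    rw [Function.iterate_succ_apply', ih, fwdDiff]
    have recurrence := incLucas_add_two_succ (m := r + t + 2 * k) (j := s + t + k) (by omega)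
    rw [show r + t + 2 * (k + 1) = r + t + 2 * k + 2 by ring,
      show s + t + (k + 1) = s + t + k + 1 by ring, show r + (t + 1) + 2 * k = r + t + 2 * k + 1 by ring,
      show s + (t + 1) + k = s + t + k + 1 by ring, recurrence]
    ring

theorem incLucas_inversion (n r s : ℕ) (h : 2 * s + n ≤ r) :
    incLucas (r + n) (s + n) =
      ∑ k ∈ Finset.range (n + 1),
        (Nat.choose n k : ℚ) * (-1) ^ (n - k) * incLucas (r + 2 * k) (s + k) := by
  rcases Nat.eq_zero_or_pos n with rfl | hn
  · simp
  have expansion := fwdDiff_iter_eq_sum_shift 1 (fun k => incLucas (r + 2 * k) (s + k)) n 0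
  rw [fwdDiff_iter_incLucas (by omega)] at expansion
  simp only [mul_zero, add_zero, zero_add, smul_eq_mul, mul_one] at expansion
  rw [expansion]
  refine sum_congr rfl fun k _ => ?_
  rw [zsmul_eq_mul]
  push_cast
  ring
end
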